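/- arXiv:2209.01453 — 3 statements merged into one kernel-verified Lean document; each statement's English description precedes it below -/
import Mathlib

section
/- If ψ(v₁) ≥ 0 then q₁ = 0 is not a maximizer of Π(·, v₁): Π(0, v₁) = ψ(v₁) while Π(1/2, v₁) = ψ(v₁) + (1/2)∫_{-∞}^{−ψ(v₁)} F(v₂|1/2) dv₂ > ψ(v₁). -/
open MeasureTheory Set

theorem setIntegral_Iic_eq_zero_of_forall_lt {f : ℝ → ℝ} {a b : ℝ} (hab : a ≤ b)
    (hf : ∀ x < b, f x = 0) : ∫ x in Iic a, f x = 0 := by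
  rw [integral_Iic_eq_integral_Iio]
  exact setIntegral_eq_zero_of_forall_eq_zero fun x hx => hf x (lt_of_lt_of_le hx hab)

theorem setIntegral_pos_of_forall_pos {X : Type*} [MeasurableSpace X] {μ : Measure X}
    {f : X → ℝ} {s : Set X} (hs : MeasurableSet s) (hμs : μ s ≠ 0)
    (hf : ∀ x ∈ s, 0 < f x) (hfi : IntegrableOn f s μ) : 0 < ∫ x in s, f x ∂μ := by
  have hsupp : Function.support f ∩ s = s :=
    inter_eq_self_of_subset_right fun x hx => (hf x hx).ne'
  rw [setIntegral_pos_iff_support_of_nonneg_ae ((ae_restrict_iff' hs).2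
    (ae_of_all _ fun x hx => (hf x hx).le)) hfi, hsupp]
  exact pos_iff_ne_zero.2 hμs

/-- If the virtual value `ψ(v₁)` is nonnegative then `q₁ = 0` is not a
maximizer of `Π(·, v₁)`: `Π(0, v₁) = ψ(v₁)` while
`Π(1/2, v₁) = ψ(v₁) + (1/2)∫_{-∞}^{−ψ(v₁)} F(v₂|1/2) dv₂ > ψ(v₁)`. -/
theorem stmt8 (F : ℝ → ℝ → ℝ) (ψ : ℝ → ℝ) (v₁ : ℝ)
    (hψ : 0 ≤ ψ v₁)
    (hF0 : ∀ v : ℝ, F v 0 = if v < 0 then 0 else 1)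
    (hIntHalf : IntegrableOn (fun v => F v (1 / 2)) (Iic (-ψ v₁)) volume)
    (hposHalf : ∀ v : ℝ, 0 < F v (1 / 2)) :
    ψ v₁ + (1 - 0) * (∫ v in Iic (-ψ v₁), F v 0) = ψ v₁ ∧
    ψ v₁ < ψ v₁ + (1 - 1 / 2) * ∫ v in Iic (-ψ v₁), F v (1 / 2) := by
  have hzero : ∫ v in Iic (-ψ v₁), F v 0 = 0 :=
    setIntegral_Iic_eq_zero_of_forall_lt (neg_nonpos.2 hψ) fun v hv => by simp [hF0, hv]
  have hpos : 0 < ∫ v in Iic (-ψ v₁), F v (1 / 2) :=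
    setIntegral_pos_of_forall_pos measurableSet_Iic (by simp [Real.volume_Iic])
      (fun v _ => hposHalf v) hIntHalf
  constructor
  · rw [hzero]; ring
  · linarith
end

section
/- Monotone zero region: if q₁*(v₁) = 0 is optimal for Π(·, v₁) at some v₁ with ψ(v₁) < 0, then q₁ = 0 is also optimal for every v₁' < v₁. Consequently the set {v₁ : q₁*(v₁) > 0} is an upper interval [ṽ₁, 1]. -/
open MeasureTheory Set

/-! Between `-ψ(v₁)` and `-ψ(v₁')` the conditional c.d.f. is at most one, so lowering the type
from `v₁` to `v₁'` raises the integral in `Π(q₁, ·)` by at most `ψ(v₁) - ψ(v₁')`, only a fraction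
`1 - q₁` of which enters the profit, while the term `ψ` drops by the full amount. Hence
`Π(q₁, v₁') ≤ Π(q₁, v₁) ≤ Π(0, v₁) = 0 = Π(0, v₁')` for `q₁ ∈ (0, 1)`; at `q₁ = 1` the profit is
`ψ(v₁') < 0`. -/

theorem setIntegral_Iic_le_add_mul_of_le {f : ℝ → ℝ} {a b c : ℝ} (hab : a ≤ b)
    (hf : IntegrableOn f (Iic b)) (hfc : ∀ x ∈ Ioo a b, f x ≤ c) :
    ∫ x in Iic b, f x ≤ (∫ x in Iic a, f x) + c * (b - a) := by
  have hfa : IntegrableOn f (Iic a) := hf.mono_set (Iic_subset_Iic.2 hab)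
  have hfab : IntervalIntegrable f volume a b :=
    (intervalIntegrable_iff_integrableOn_Ioc_of_le hab).2 (hf.mono_set Ioc_subset_Iic_self)
  have hmono : ∫ x in a..b, f x ≤ ∫ _ in a..b, c :=
    intervalIntegral.integral_mono_on_of_le_Ioo hab hfab intervalIntegrable_const hfc
  rw [← intervalIntegral.integral_Iic_sub_Iic hfa hf, intervalIntegral.integral_const,
    smul_eq_mul] at hmono
  linarith

theorem add_one_sub_mul_setIntegral_Iic_neg_le {f : ℝ → ℝ} {q s t : ℝ} (hq₀ : 0 ≤ q)
    (hq₁ : q ≤ 1) (hst : s ≤ t) (hf : IntegrableOn f (Iic (-s)))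
    (hf₁ : ∀ x ∈ Ioo (-t) (-s), f x ≤ 1) :
    s + (1 - q) * ∫ x in Iic (-s), f x ≤ t + (1 - q) * ∫ x in Iic (-t), f x := by
  have hint := setIntegral_Iic_le_add_mul_of_le (neg_le_neg hst) hf hf₁
  calc s + (1 - q) * ∫ x in Iic (-s), f x
      ≤ s + (1 - q) * ((∫ x in Iic (-t), f x) + 1 * (-s - -t)) := by
        gcongr
    _ = t + (1 - q) * (∫ x in Iic (-t), f x) - q * (t - s) := by ring
    _ ≤ t + (1 - q) * ∫ x in Iic (-t), f x := by nlinarith [mul_nonneg hq₀ (sub_nonneg.2 hst)]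

theorem stmt9_general (F : ℝ → ℝ → ℝ) (ψ : ℝ → ℝ) (Pr : ℝ → ℝ → ℝ)
    (hψ : StrictMono ψ)
    (hPr : ∀ q v, Pr q v = ψ v + (1 - q) * ∫ v₂ in Iic (-ψ v), F v₂ q)
    (hF1 : ∀ q ∈ Ioo (0:ℝ) 1, ∀ v₂ : ℝ, F v₂ q < 1)
    (hdeg : ∀ v : ℝ, ψ v < 0 → ∫ v₂ in Iic (-ψ v), F v₂ 0 = -ψ v)
    (hInt : ∀ q ∈ Icc (0:ℝ) 1, ∀ v : ℝ,
      IntegrableOn (fun v₂ => F v₂ q) (Iic (-ψ v)) volume)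
    (v₁ : ℝ) (hneg : ψ v₁ < 0)
    (hmax : IsMaxOn (fun q => Pr q v₁) (Icc 0 1) 0) :
    ∀ v₁' ∈ Icc (0:ℝ) 1, v₁' < v₁ → IsMaxOn (fun q => Pr q v₁') (Icc 0 1) 0 := by
  intro v₁' _ hlt q ⟨hq₀, hq₁⟩
  have hPr_zero : ∀ v, ψ v < 0 → Pr 0 v = 0 := fun v hv => by rw [hPr, hdeg v hv]; ring
  have hneg' : ψ v₁' < 0 := (hψ hlt).trans hneg
  show Pr q v₁' ≤ Pr 0 v₁'
  rcases hq₀.eq_or_lt with rfl | hq₀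
  · exact le_rfl
  rcases hq₁.eq_or_lt with rfl | hq₁
  · rw [hPr, hPr_zero v₁' hneg']; simpa using hneg'.le
  calc Pr q v₁' ≤ Pr q v₁ := by
        rw [hPr, hPr]
        exact add_one_sub_mul_setIntegral_Iic_neg_le hq₀.le hq₁.le (hψ hlt).le
          (hInt q ⟨hq₀.le, hq₁.le⟩ v₁') fun x _ => (hF1 q ⟨hq₀, hq₁⟩ x).le
    _ ≤ Pr 0 v₁ := hmax ⟨hq₀.le, hq₁.le⟩
    _ = Pr 0 v₁' := by rw [hPr_zero v₁ hneg, hPr_zero v₁' hneg']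

/-- Monotone zero region: if `q₁ = 0` is optimal for `Π(·, v₁)` at some `v₁`
with `ψ(v₁) < 0`, then `q₁ = 0` is also optimal for every lower type
`v₁' < v₁`. -/
theorem stmt9 (F : ℝ → ℝ → ℝ) (ψ : ℝ → ℝ) (Pr : ℝ → ℝ → ℝ)
    (hψ : StrictMono ψ)
    (hPr : ∀ q v, Pr q v = ψ v + (1 - q) * ∫ v₂ in Iic (-ψ v), F v₂ q)
    (hF1 : ∀ q ∈ Ioo (0:ℝ) 1, ∀ v₂ : ℝ, F v₂ q < 1)
    (hF0 : ∀ q ∈ Icc (0:ℝ) 1, ∀ v₂ : ℝ, 0 ≤ F v₂ q)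
    (hdeg : ∀ v : ℝ, ψ v < 0 → ∫ v₂ in Iic (-ψ v), F v₂ 0 = -ψ v)
    (hInt : ∀ q ∈ Icc (0:ℝ) 1, ∀ v : ℝ,
      IntegrableOn (fun v₂ => F v₂ q) (Iic (-ψ v)) volume)
    (v₁ : ℝ) (hneg : ψ v₁ < 0)
    (hmax : IsMaxOn (fun q => Pr q v₁) (Icc 0 1) 0) :
    ∀ v₁' ∈ Icc (0:ℝ) 1, v₁' < v₁ → IsMaxOn (fun q => Pr q v₁') (Icc 0 1) 0 :=
  stmt9_general F ψ Pr hψ hPr hF1 hdeg hInt v₁ hneg hmax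
end

section
/- First-best exceeds second-best information acquisition: let q₁^{FB}(v₁) maximize Π̃(q₁,v₁) = v₁ + (1−q₁)∫_{-∞}^{−v₁}F(v₂|q₁)dv₂ and q₁*(v₁) maximize Π(q₁,v₁) = ψ(v₁) + (1−q₁)∫_{-∞}^{−ψ(v₁)}F(v₂|q₁)dv₂. Then q₁^{FB}(v₁) = q₁*(ψ⁻¹(v₁)) for v₁ ∈ [0,1], q₁^{FB} is strictly increasing, and q₁^{FB}(v₁) ≥ q₁*(v₁) with strict inequality for v₁ ∈ [0,1). -/
/-!
Since `Π(q, v) = Π̃(q, ψ v)`, the second-best problem at `ψ⁻¹ v` is the first-best problem at `v`,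
so `q₁^{FB} = q₁* ∘ ψ⁻¹` on `[0,1]`. As `ψ⁻¹` is strictly increasing with `ψ⁻¹ v ≥ v` (strictly
for `v < 1`) and lands above the cutoff `ṽ₁`, everything follows from the shape of `q₁*`: zero
below `ṽ₁`, strictly increasing above it.
-/

open MeasureTheory Set

theorem Monotone.strictMonoOn_of_rightInvOn {α β : Type*} [LinearOrder α] [Preorder β]
    {f : α → β} {g : β → α} {s : Set β} (hf : Monotone f) (hfg : RightInvOn g f s) :
    StrictMonoOn g s := by
  intro a ha b hb hab
  by_contra! hba
  have := hf hba
  rw [hfg hb, hfg ha] at this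
  exact hab.not_ge this

section BelowIdentity

variable {ψ : ℝ → ℝ} (hψlt : ∀ v < 1, ψ v < v) {v w : ℝ}
include hψlt

theorem le_of_apply_eq_of_apply_lt_self (hv : v ≤ 1) (h : ψ w = v) : v ≤ w := by
  by_contra! hwv
  linarith [hψlt w (hwv.trans_le hv)]

theorem lt_of_apply_eq_of_apply_lt_self (hv : v < 1) (h : ψ w = v) : v < w := by
  by_contra! hwv
  linarith [hψlt w (hwv.trans_lt hv)]

end BelowIdentity

theorem lt_of_strictMonoOn_Icc_of_eq_zero_of_lt {q : ℝ → ℝ} {c v w : ℝ}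
    (hmono : StrictMonoOn q (Icc c 1)) (hzero : ∀ v < c, q v = 0)
    (hnonneg : ∀ v ∈ Icc (0 : ℝ) 1, 0 ≤ q v) (hv : 0 ≤ v) (hw : w ∈ Ioc c 1) (hvw : v < w) :
    q v < q w := by
  rcases lt_or_ge v c with hvc | hcv
  · have hc : c ∈ Icc (0 : ℝ) 1 := ⟨hv.trans hvc.le, hw.1.le.trans hw.2⟩
    calc q v = 0 := hzero v hvc
      _ ≤ q c := hnonneg c hc
      _ < q w := hmono ⟨le_rfl, hc.2⟩ (Ioc_subset_Icc_self hw) hw.1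
  · exact hmono ⟨hcv, hvw.le.trans hw.2⟩ (Ioc_subset_Icc_self hw) hvw

theorem stmt19_general (F : ℝ → ℝ → ℝ) (ψ ψinv q₁FB q₁star : ℝ → ℝ)
    (hψ : StrictMono ψ)
    (hψlt : ∀ v : ℝ, v < 1 → ψ v < v)
    (hinv : ∀ v ∈ Icc (0:ℝ) 1, ψ (ψinv v) = v ∧ ψinv v ∈ Icc (0:ℝ) 1)
    (PrFB Pr : ℝ → ℝ → ℝ)
    (hPrFB : ∀ q v, PrFB q v = v + (1 - q) * ∫ v₂ in Iic (-v), F v₂ q)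
    (hPr : ∀ q v, Pr q v = ψ v + (1 - q) * ∫ v₂ in Iic (-ψ v), F v₂ q)
    (hFBuniq : ∀ v ∈ Icc (0:ℝ) 1, ∀ q ∈ Icc (0:ℝ) 1,
        IsMaxOn (fun q' => PrFB q' v) (Icc 0 1) q → q = q₁FB v)
    (hStar : ∀ v ∈ Icc (0:ℝ) 1, IsMaxOn (fun q => Pr q v) (Icc 0 1) (q₁star v))
    (hq₁starMem : ∀ v ∈ Icc (0:ℝ) 1, q₁star v ∈ Icc (0:ℝ) 1)
    (vt₁ : ℝ) (hcut : vt₁ < ψinv 0)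
    (hmono : StrictMonoOn q₁star (Icc vt₁ 1))
    (hzero : ∀ v : ℝ, v < vt₁ → q₁star v = 0) :
    (∀ v ∈ Icc (0:ℝ) 1, q₁FB v = q₁star (ψinv v)) ∧
    StrictMonoOn q₁FB (Icc 0 1) ∧
    (∀ v ∈ Icc (0:ℝ) 1, q₁star v ≤ q₁FB v ∧ (v < 1 → q₁star v < q₁FB v)) := by
  have hPr_eq : ∀ q w, Pr q w = PrFB q (ψ w) := fun q w => by rw [hPr, hPrFB]
  have hFB_eq : ∀ v ∈ Icc (0:ℝ) 1, q₁FB v = q₁star (ψinv v) := by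
    intro v hv
    obtain ⟨hψψ, hmem⟩ := hinv v hv
    refine (hFBuniq v hv _ (hq₁starMem _ hmem) ?_).symm
    simpa only [hPr_eq, hψψ] using hStar _ hmem
  have hinvMono : StrictMonoOn ψinv (Icc 0 1) :=
    hψ.monotone.strictMonoOn_of_rightInvOn fun v hv => (hinv v hv).1
  have hinvMaps : MapsTo ψinv (Icc 0 1) (Ioc vt₁ 1) := fun v hv =>
    ⟨hcut.trans_le (hinvMono.monotoneOn ⟨le_rfl, zero_le_one⟩ hv hv.1), (hinv v hv).2.2⟩
  have hlt : ∀ v ∈ Icc (0:ℝ) 1, v < ψinv v → q₁star v < q₁FB v := fun v hv hvw =>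
    hFB_eq v hv ▸ lt_of_strictMonoOn_Icc_of_eq_zero_of_lt hmono hzero
      (fun w hw => (hq₁starMem w hw).1) hv.1 (hinvMaps hv) hvw
  refine ⟨hFB_eq, ?_, fun v hv => ⟨?_, fun h1 => hlt v hv ?_⟩⟩
  · exact (hmono.comp hinvMono (hinvMaps.mono_right Ioc_subset_Icc_self)).congr
      fun v hv => (hFB_eq v hv).symm
  · rcases (le_of_apply_eq_of_apply_lt_self hψlt hv.2 (hinv v hv).1).eq_or_lt with h | h
    · rw [hFB_eq v hv, ← h]
    · exact (hlt v hv h).le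
  · exact lt_of_apply_eq_of_apply_lt_self hψlt h1 (hinv v hv).1

/-- First-best exceeds second-best information acquisition:
`q₁^{FB}(v₁) = q₁*(ψ⁻¹(v₁))` on `[0,1]`, `q₁^{FB}` is strictly increasing on
`[0,1]`, and `q₁^{FB}(v₁) ≥ q₁*(v₁)` with strict inequality for `v₁ < 1`. -/
theorem stmt19 (F : ℝ → ℝ → ℝ) (ψ ψinv q₁FB q₁star : ℝ → ℝ)
    (hψ : StrictMono ψ)
    (hψlt : ∀ v : ℝ, v < 1 → ψ v < v) (hψ1 : ψ 1 = 1)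
    (hinv : ∀ v ∈ Icc (0:ℝ) 1, ψ (ψinv v) = v ∧ ψinv v ∈ Icc (0:ℝ) 1)
    (PrFB Pr : ℝ → ℝ → ℝ)
    (hPrFB : ∀ q v, PrFB q v = v + (1 - q) * ∫ v₂ in Iic (-v), F v₂ q)
    (hPr : ∀ q v, Pr q v = ψ v + (1 - q) * ∫ v₂ in Iic (-ψ v), F v₂ q)
    (hFB : ∀ v ∈ Icc (0:ℝ) 1, IsMaxOn (fun q => PrFB q v) (Icc 0 1) (q₁FB v))
    (hFBuniq : ∀ v ∈ Icc (0:ℝ) 1, ∀ q ∈ Icc (0:ℝ) 1,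
        IsMaxOn (fun q' => PrFB q' v) (Icc 0 1) q → q = q₁FB v)
    (hStar : ∀ v ∈ Icc (0:ℝ) 1, IsMaxOn (fun q => Pr q v) (Icc 0 1) (q₁star v))
    (hStarUniq : ∀ v ∈ Icc (0:ℝ) 1, ∀ q ∈ Icc (0:ℝ) 1,
        IsMaxOn (fun q' => Pr q' v) (Icc 0 1) q → q = q₁star v)
    (hq₁starMem : ∀ v ∈ Icc (0:ℝ) 1, q₁star v ∈ Icc (0:ℝ) 1)
    (hq₁FBMem : ∀ v ∈ Icc (0:ℝ) 1, q₁FB v ∈ Icc (0:ℝ) 1)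
    (vt₁ : ℝ) (hcut : vt₁ < ψinv 0)
    (hmono : StrictMonoOn q₁star (Icc vt₁ 1))
    (hzero : ∀ v : ℝ, v < vt₁ → q₁star v = 0) :
    (∀ v ∈ Icc (0:ℝ) 1, q₁FB v = q₁star (ψinv v)) ∧
    StrictMonoOn q₁FB (Icc 0 1) ∧
    (∀ v ∈ Icc (0:ℝ) 1, q₁star v ≤ q₁FB v ∧ (v < 1 → q₁star v < q₁FB v)) :=
  stmt19_general F ψ ψinv q₁FB q₁star hψ hψlt hinv PrFB Pr hPrFB hPr hFBuniq hStar hq₁starMem vt₁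
    hcut hmono hzero
end
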